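/- arXiv:1809.00775 — 2 statements merged into one kernel-verified Lean document; each statement's English description precedes it below -/
import Mathlib

section
/- Let M ∈ ℝ^{ν×d} be ζ-Diophantine with constant C_ζ > 0, i.e. d(Mx + θ, θ) ≥ C_ζ/‖x‖^ζ on the torus 𝕋^ν for all x ∈ ℤ^d \ {0}. Suppose h : 𝕋^ν → [0,∞) is continuous with a single zero θ̃ and satisfies h(θ') ≥ c·d(θ',θ̃)^σ for some c > 0. If α > γσζ, then for all sufficiently large L, for any phase θ, the number of x ∈ ℤ^d with ‖x‖ ≤ L satisfying h(Mx + θ) < L^{-α/γ} is at most 1. -/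
open scoped BigOperators
open Filter Topology

/-!
Both points `Mx₁ + θ` and `Mx₂ + θ` lie in the sublevel set `{h < L^{-α/γ}}`, which by the
power-law lower bound on `h` is contained in a ball of radius `r ≍ L^{-α/(γσ)}` around `θ̃`. Their
difference is the orbit point of `x₁ - x₂`, with `‖x₁ - x₂‖ ≤ 2L`, so if `x₁ ≠ x₂` the Diophantine
condition separates them by at least `C_ζ (2L)^{-ζ}`. Since `α/(γσ) > ζ`, the ratio
`2r / (C_ζ (2L)^{-ζ})` tends to `0`, so for large `L` the ball is too small to hold both points.
-/

noncomputable section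

variable {ν d : ℕ}

def orbitPoint (M : Matrix (Fin ν) (Fin d) ℝ) (θ : Fin ν → AddCircle (1 : ℝ))
    (x : Fin d → ℤ) : Fin ν → AddCircle (1 : ℝ) :=
  fun i => ((∑ j, M i j * (x j : ℝ) : ℝ) : AddCircle (1 : ℝ)) + θ i

theorem orbitPoint_sub (M : Matrix (Fin ν) (Fin d) ℝ) (θ : Fin ν → AddCircle (1 : ℝ))
    (x₁ x₂ : Fin d → ℤ) :
    orbitPoint M (orbitPoint M θ x₂) (x₁ - x₂) = orbitPoint M θ x₁ := by
  funext i
  have hsum : ∑ j, M i j * ((x₁ - x₂) j : ℝ) =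
      ∑ j, M i j * (x₁ j : ℝ) - ∑ j, M i j * (x₂ j : ℝ) := by
    rw [← Finset.sum_sub_distrib]
    simp only [Pi.sub_apply, Int.cast_sub, mul_sub]
  simp only [orbitPoint, hsum, AddCircle.coe_sub, ← add_assoc, sub_add_cancel]

theorem div_two_mul_rpow_le_dist_orbitPoint {M : Matrix (Fin ν) (Fin d) ℝ} {ζ Cζ L : ℝ}
    (hCζ : 0 < Cζ) (hζ : 0 ≤ ζ)
    (hDio : ∀ x : Fin d → ℤ, x ≠ 0 → ∀ θ : Fin ν → AddCircle (1 : ℝ),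
      Cζ / ‖x‖ ^ ζ ≤ dist (orbitPoint M θ x) θ)
    (θ : Fin ν → AddCircle (1 : ℝ)) {x₁ x₂ : Fin d → ℤ} (hne : x₁ ≠ x₂)
    (hx₁ : ‖x₁‖ ≤ L) (hx₂ : ‖x₂‖ ≤ L) :
    Cζ / (2 * L) ^ ζ ≤ dist (orbitPoint M θ x₁) (orbitPoint M θ x₂) := by
  have hx : x₁ - x₂ ≠ 0 := sub_ne_zero_of_ne hne
  have hnorm : ‖x₁ - x₂‖ ≤ 2 * L := by linarith [norm_sub_le x₁ x₂]
  have hpos : 0 < ‖x₁ - x₂‖ ^ ζ := Real.rpow_pos_of_pos (norm_pos_iff.2 hx) ζ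
  calc Cζ / (2 * L) ^ ζ ≤ Cζ / ‖x₁ - x₂‖ ^ ζ := by
        gcongr
    _ ≤ _ := orbitPoint_sub M θ x₁ x₂ ▸ hDio _ hx _

theorem eq_of_dist_orbitPoint_lt {M : Matrix (Fin ν) (Fin d) ℝ} {ζ Cζ L r : ℝ}
    (hCζ : 0 < Cζ) (hζ : 0 ≤ ζ)
    (hDio : ∀ x : Fin d → ℤ, x ≠ 0 → ∀ θ : Fin ν → AddCircle (1 : ℝ),
      Cζ / ‖x‖ ^ ζ ≤ dist (orbitPoint M θ x) θ)
    (hL : 0 < L) (hr : 2 * r * (2 * L) ^ ζ ≤ Cζ) {θ θt : Fin ν → AddCircle (1 : ℝ)}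
    {x₁ x₂ : Fin d → ℤ} (hx₁ : ‖x₁‖ ≤ L) (hx₂ : ‖x₂‖ ≤ L)
    (h₁ : dist (orbitPoint M θ x₁) θt < r) (h₂ : dist (orbitPoint M θ x₂) θt < r) :
    x₁ = x₂ := by
  by_contra hne
  have hsep := div_two_mul_rpow_le_dist_orbitPoint hCζ hζ hDio θ hne hx₁ hx₂
  have hclose : dist (orbitPoint M θ x₁) (orbitPoint M θ x₂) < 2 * r := by
    linarith [dist_triangle_right (orbitPoint M θ x₁) (orbitPoint M θ x₂) θt]
  have h2L : 0 < (2 * L) ^ ζ := Real.rpow_pos_of_pos (by linarith) ζ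
  rw [div_le_iff₀ h2L] at hsep
  nlinarith

theorem dist_lt_rpow_of_mul_rpow_le {X : Type*} [PseudoMetricSpace X] {p q : X}
    {c σ a ε : ℝ} (hc : 0 < c) (hσ : 0 < σ) (hlow : c * dist p q ^ σ ≤ a) (ha : a < ε) :
    dist p q < (ε / c) ^ (1 / σ) := by
  have hlt : dist p q ^ σ < ε / c := by
    rw [lt_div_iff₀ hc]
    linarith
  calc dist p q = (dist p q ^ σ) ^ (1 / σ) := by
        rw [← Real.rpow_mul dist_nonneg, mul_one_div_cancel hσ.ne', Real.rpow_one]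
    _ < (ε / c) ^ (1 / σ) :=
        Real.rpow_lt_rpow (Real.rpow_nonneg dist_nonneg σ) hlt (one_div_pos.2 hσ)

/-- The radius `(L^{-β}/c)^{1/σ}` of the sublevel ball shrinks faster than `(2L)^{-ζ}`. -/
theorem tendsto_sublevelRadius_mul_rpow {c σ β ζ : ℝ} (hc : 0 < c) (hσ : 0 < σ)
    (hβ : σ * ζ < β) :
    Tendsto (fun L : ℝ => 2 * (L ^ (-β) / c) ^ (1 / σ) * (2 * L) ^ ζ) atTop (𝓝 0) := by
  have hexp : 0 < β / σ - ζ := by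
    rw [sub_pos, lt_div_iff₀ hσ]
    linarith
  have hlim := (tendsto_rpow_neg_atTop hexp).const_mul (2 * c ^ (-(1 / σ)) * 2 ^ ζ)
  rw [mul_zero] at hlim
  refine hlim.congr' ?_
  filter_upwards [eventually_gt_atTop 0] with L hL
  rw [Real.div_rpow (Real.rpow_nonneg hL.le _) hc.le, ← Real.rpow_mul hL.le,
    Real.mul_rpow zero_le_two hL.le, Real.rpow_neg hc.le,
    show -(β / σ - ζ) = -β * (1 / σ) + ζ by ring, Real.rpow_add hL]
  field_simp

end

theorem stmt0_general (ν d : ℕ) (M : Matrix (Fin ν) (Fin d) ℝ)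
    (ζ Cζ c σ α γ : ℝ) (hCζ : 0 < Cζ) (hc : 0 < c) (hσ : 0 < σ) (hζ : 0 < ζ)
    (hγ : 0 < γ)
    (hDio : ∀ x : Fin d → ℤ, x ≠ 0 → ∀ θ : Fin ν → AddCircle (1 : ℝ),
      Cζ / ‖x‖ ^ ζ ≤
        dist (fun i => ((∑ j, M i j * (x j : ℝ) : ℝ) : AddCircle (1 : ℝ)) + θ i) θ)
    (h : (Fin ν → AddCircle (1 : ℝ)) → ℝ)
    (θt : Fin ν → AddCircle (1 : ℝ))
    (hlow : ∀ θ', c * dist θ' θt ^ σ ≤ h θ')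
    (hα : α > γ * σ * ζ) :
    ∃ L0 : ℝ, ∀ L ≥ L0, ∀ θ : Fin ν → AddCircle (1 : ℝ),
      ∀ x₁ x₂ : Fin d → ℤ, ‖x₁‖ ≤ L → ‖x₂‖ ≤ L →
        h (fun i => ((∑ j, M i j * (x₁ j : ℝ) : ℝ) : AddCircle (1 : ℝ)) + θ i)
          < L ^ (-(α / γ)) →
        h (fun i => ((∑ j, M i j * (x₂ j : ℝ) : ℝ) : AddCircle (1 : ℝ)) + θ i)
          < L ^ (-(α / γ)) →
        x₁ = x₂ := by
  have hβ : σ * ζ < α / γ := by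
    rw [lt_div_iff₀ hγ]
    linarith
  obtain ⟨L0, hL0⟩ := eventually_atTop.1
    (((tendsto_sublevelRadius_mul_rpow hc hσ hβ).eventually_lt_const hCζ).and
      (eventually_gt_atTop 0))
  refine ⟨L0, fun L hL θ x₁ x₂ hx₁ hx₂ hh₁ hh₂ => ?_⟩
  obtain ⟨hsmall, hLpos⟩ := hL0 L hL
  exact eq_of_dist_orbitPoint_lt hCζ hζ.le hDio hLpos hsmall.le hx₁ hx₂
    (dist_lt_rpow_of_mul_rpow_le hc hσ (hlow _) hh₁)
    (dist_lt_rpow_of_mul_rpow_le hc hσ (hlow _) hh₂)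

/-- If `M` is ζ-Diophantine and `h` has a single zero `θt` with power-law lower bound
`h(θ') ≥ c·d(θ',θt)^σ`, and `α > γσζ`, then for all large `L` at most one `x` with
`‖x‖ ≤ L` satisfies `h(Mx+θ) < L^{-α/γ}`. -/
theorem stmt0 (ν d : ℕ) (hd : 0 < d) (M : Matrix (Fin ν) (Fin d) ℝ)
    (ζ Cζ c σ α γ : ℝ) (hCζ : 0 < Cζ) (hc : 0 < c) (hσ : 0 < σ) (hζ : 0 < ζ)
    (hγ : 0 < γ)
    (hDio : ∀ x : Fin d → ℤ, x ≠ 0 → ∀ θ : Fin ν → AddCircle (1 : ℝ),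
      Cζ / ‖x‖ ^ ζ ≤
        dist (fun i => ((∑ j, M i j * (x j : ℝ) : ℝ) : AddCircle (1 : ℝ)) + θ i) θ)
    (h : (Fin ν → AddCircle (1 : ℝ)) → ℝ) (hcont : Continuous h) (hnn : ∀ θ, 0 ≤ h θ)
    (θt : Fin ν → AddCircle (1 : ℝ))
    (hzero : ∀ θ', h θ' = 0 ↔ θ' = θt)
    (hlow : ∀ θ', c * dist θ' θt ^ σ ≤ h θ')
    (hα : α > γ * σ * ζ) :
    ∃ L0 : ℝ, ∀ L ≥ L0, ∀ θ : Fin ν → AddCircle (1 : ℝ),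
      ∀ x₁ x₂ : Fin d → ℤ, ‖x₁‖ ≤ L → ‖x₂‖ ≤ L →
        h (fun i => ((∑ j, M i j * (x₁ j : ℝ) : ℝ) : AddCircle (1 : ℝ)) + θ i)
          < L ^ (-(α / γ)) →
        h (fun i => ((∑ j, M i j * (x₂ j : ℝ) : ℝ) : AddCircle (1 : ℝ)) + θ i)
          < L ^ (-(α / γ)) →
        x₁ = x₂ :=
  stmt0_general ν d M ζ Cζ c σ α γ hCζ hc hσ hζ hγ hDio h θt hlow hα
end

section
/- Let M ∈ ℝ^{ν×d} be ζ-Diophantine and h : 𝕋^ν → [0,∞) continuous with zero set h^{-1}(0) of finite cardinality R, and suppose h(θ') ≥ c·min_{θ̃ ∈ h^{-1}(0)} d(θ',θ̃)^σ. If α > γσζ, then for all sufficiently large L and any phase θ, the number of x ∈ ℤ^d with ‖x‖₁ ≤ L such that h(Mx+θ) < L^{-α/γ} is at most R. -/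
open scoped BigOperators
open Filter

/-!
Fix `L` and `θ`, and send every `x` counted by the theorem to a zero `θ̃` of `h` with
`c · d(Mx+θ, θ̃)^σ ≤ h(Mx+θ) < L^{-α/γ}`, so that `Mx+θ` lies within `r = (L^{-α/γ}/c)^{1/σ}` of
`θ̃`. Two counted points `x ≠ y` with the same zero would give `d(Mx+θ, My+θ) < 2r`, while the
Diophantine condition applied to `x - y`, whose sup norm is at most `2L`, gives
`d(Mx+θ, My+θ) ≥ C_ζ (2L)^{-ζ}`. Since `r` decays like `L^{-α/(γσ)}` and `α/(γσ) > ζ`, the two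
bounds are incompatible for large `L`, so the map is injective into `h⁻¹(0)`.
-/

def torusOrbit {ν d : ℕ} (M : Matrix (Fin ν) (Fin d) ℝ) (θ : Fin ν → AddCircle (1 : ℝ))
    (x : Fin d → ℤ) : Fin ν → AddCircle (1 : ℝ) :=
  fun i => ((∑ j, M i j * (x j : ℝ) : ℝ) : AddCircle (1 : ℝ)) + θ i

lemma torusOrbit_sub {ν d : ℕ} (M : Matrix (Fin ν) (Fin d) ℝ) (θ : Fin ν → AddCircle (1 : ℝ))
    (x y : Fin d → ℤ) : torusOrbit M (torusOrbit M θ y) (x - y) = torusOrbit M θ x := by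
  funext i
  have hsum : ∑ j, M i j * ((x - y) j : ℝ) = ∑ j, M i j * (x j : ℝ) - ∑ j, M i j * (y j : ℝ) := by
    simp only [Pi.sub_apply, Int.cast_sub, mul_sub, Finset.sum_sub_distrib]
  simp only [torusOrbit, hsum, AddCircle.coe_sub]
  abel

lemma le_dist_torusOrbit {ν d : ℕ} {M : Matrix (Fin ν) (Fin d) ℝ} {ζ Cζ : ℝ}
    (hDio : ∀ x : Fin d → ℤ, x ≠ 0 → ∀ θ, Cζ / ‖x‖ ^ ζ ≤ dist (torusOrbit M θ x) θ)
    (θ : Fin ν → AddCircle (1 : ℝ)) {x y : Fin d → ℤ} (hxy : x ≠ y) :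
    Cζ / ‖x - y‖ ^ ζ ≤ dist (torusOrbit M θ x) (torusOrbit M θ y) := by
  simpa only [torusOrbit_sub] using hDio (x - y) (sub_ne_zero.mpr hxy) (torusOrbit M θ y)

lemma norm_le_sum_abs {ι : Type*} [Fintype ι] (x : ι → ℤ) : ‖x‖ ≤ ∑ i, (|x i| : ℝ) :=
  (pi_norm_le_iff_of_nonneg (by positivity)).mpr fun i => by
    rw [Int.norm_eq_abs]
    exact Finset.single_le_sum (f := fun i => (|x i| : ℝ)) (fun j _ => abs_nonneg _)
      (Finset.mem_univ i)

lemma encard_le_of_near_of_separated {ι X : Type*} [PseudoMetricSpace X] {S : Set ι}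
    {Z : Set X} {p : ι → X} {r : ℝ} (hnear : ∀ x ∈ S, ∃ z ∈ Z, dist (p x) z < r)
    (hsep : S.Pairwise fun x y => 2 * r ≤ dist (p x) (p y)) : S.encard ≤ Z.encard := by
  rcases S.eq_empty_or_nonempty with rfl | ⟨x₀, -⟩
  · simp
  have : Nonempty X := ⟨p x₀⟩
  choose! f hfZ hfdist using hnear
  refine Set.encard_le_encard_of_injOn (fun x hx => hfZ x hx) fun x hx y hy hfxy => ?_
  by_contra hxy
  have hclose : dist (p x) (p y) < 2 * r := by
    calc dist (p x) (p y) ≤ dist (p x) (f x) + dist (p y) (f y) := by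
          rw [hfxy]; exact dist_triangle_right _ _ _
      _ < 2 * r := by linarith [hfdist x hx, hfdist y hy]
  exact (hsep hx hy hxy).not_gt hclose

lemma lt_rpow_one_div_of_mul_rpow_lt {t c σ ε : ℝ} (ht : 0 ≤ t) (hc : 0 < c) (hσ : 0 < σ)
    (h : c * t ^ σ < ε) : t < (ε / c) ^ (1 / σ) := by
  have htσ : t ^ σ < ε / c := by rw [lt_div_iff₀ hc]; linarith
  calc t = (t ^ σ) ^ (1 / σ) := by rw [← Real.rpow_mul ht, mul_one_div_cancel hσ.ne', Real.rpow_one]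
    _ < (ε / c) ^ (1 / σ) := Real.rpow_lt_rpow (by positivity) htσ (by positivity)

lemma eventually_mul_rpow_neg_le (A : ℝ) {B s t : ℝ} (hB : 0 < B) (hts : t < s) :
    ∀ᶠ L in atTop, A * L ^ (-s) ≤ B * L ^ (-t) := by
  have hdecay : Tendsto (fun L : ℝ => A * L ^ (-(s - t))) atTop (nhds 0) := by
    simpa using (tendsto_rpow_neg_atTop (sub_pos.mpr hts)).const_mul A
  filter_upwards [hdecay.eventually_le_const hB, eventually_gt_atTop 0] with L hL hLpos
  calc A * L ^ (-s) = A * L ^ (-(s - t)) * L ^ (-t) := by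
        rw [mul_assoc, ← Real.rpow_add hLpos]; ring_nf
    _ ≤ B * L ^ (-t) := mul_le_mul_of_nonneg_right hL (by positivity)

lemma eventually_two_mul_rpow_le {a c σ ζ Cζ : ℝ} (hc : 0 < c) (hσ : 0 < σ) (hCζ : 0 < Cζ)
    (ha : σ * ζ < a) :
    ∀ᶠ L in atTop, 2 * (L ^ (-a) / c) ^ (1 / σ) ≤ Cζ / (2 * L) ^ ζ := by
  have hζa : ζ < a / σ := by rwa [lt_div_iff₀ hσ, mul_comm]
  filter_upwards [eventually_mul_rpow_neg_le (2 / c ^ (1 / σ)) (by positivity : 0 < Cζ / 2 ^ ζ)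
    hζa, eventually_gt_atTop 0] with L hL hLpos
  have hlhs : 2 * (L ^ (-a) / c) ^ (1 / σ) = 2 / c ^ (1 / σ) * L ^ (-(a / σ)) := by
    rw [Real.div_rpow (by positivity) hc.le, ← Real.rpow_mul hLpos.le]
    ring_nf
  have hrhs : Cζ / (2 * L) ^ ζ = Cζ / 2 ^ ζ * L ^ (-ζ) := by
    rw [Real.mul_rpow zero_le_two hLpos.le, Real.rpow_neg hLpos.le]
    ring
  rwa [hlhs, hrhs]

theorem stmt1_general (ν d : ℕ) (M : Matrix (Fin ν) (Fin d) ℝ)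
    (ζ Cζ c σ α γ : ℝ) (hCζ : 0 < Cζ) (hc : 0 < c) (hσ : 0 < σ) (hζ : 0 < ζ)
    (hγ : 0 < γ)
    (hDio : ∀ x : Fin d → ℤ, x ≠ 0 → ∀ θ : Fin ν → AddCircle (1 : ℝ),
      Cζ / ‖x‖ ^ ζ ≤
        dist (fun i => ((∑ j, M i j * (x j : ℝ) : ℝ) : AddCircle (1 : ℝ)) + θ i) θ)
    (h : (Fin ν → AddCircle (1 : ℝ)) → ℝ)
    (hfin : {θ' | h θ' = 0}.Finite)
    (hlow : ∀ θ', ∃ θt, h θt = 0 ∧ c * dist θ' θt ^ σ ≤ h θ')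
    (hα : α > γ * σ * ζ) :
    ∃ L0 : ℝ, ∀ L ≥ L0, ∀ θ : Fin ν → AddCircle (1 : ℝ),
      {x : Fin d → ℤ | (∑ i, (|x i| : ℝ)) ≤ L ∧
        h (fun i => ((∑ j, M i j * (x j : ℝ) : ℝ) : AddCircle (1 : ℝ)) + θ i)
          < L ^ (-(α / γ))}.encard ≤ {θ' | h θ' = 0}.ncard := by
  have hαγ : σ * ζ < α / γ := by rw [lt_div_iff₀ hγ]; linarith
  obtain ⟨L0, hL0⟩ := eventually_atTop.mp
    ((eventually_two_mul_rpow_le hc hσ hCζ hαγ).and (eventually_gt_atTop 0))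
  refine ⟨L0, fun L hL θ => ?_⟩
  obtain ⟨hsmall, hLpos⟩ := hL0 L hL
  rw [hfin.cast_ncard_eq]
  refine encard_le_of_near_of_separated (p := torusOrbit M θ) (r := (L ^ (-(α / γ)) / c) ^ (1 / σ))
    (fun x hx => ?_) fun x hx y hy hxy => ?_
  · obtain ⟨θt, hθt, hbound⟩ := hlow (torusOrbit M θ x)
    exact ⟨θt, hθt, lt_rpow_one_div_of_mul_rpow_lt dist_nonneg hc hσ (hbound.trans_lt hx.2)⟩
  · have hnorm : ‖x - y‖ ≤ 2 * L := by
      linarith [norm_sub_le x y, (norm_le_sum_abs x).trans hx.1, (norm_le_sum_abs y).trans hy.1]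
    calc 2 * (L ^ (-(α / γ)) / c) ^ (1 / σ) ≤ Cζ / (2 * L) ^ ζ := hsmall
      _ ≤ Cζ / ‖x - y‖ ^ ζ := by
        have : 0 < ‖x - y‖ := norm_pos_iff.mpr (sub_ne_zero.mpr hxy)
        gcongr
      _ ≤ dist (torusOrbit M θ x) (torusOrbit M θ y) := le_dist_torusOrbit hDio θ hxy

/-- If `M` is ζ-Diophantine and `h` has finite zero set of cardinality `R`, with
`h(θ') ≥ c·min_{θ̃∈h⁻¹(0)} d(θ',θ̃)^σ`, and `α > γσζ`, then for all large `L` the number of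
`x ∈ ℤ^d` with `‖x‖₁ ≤ L` and `h(Mx+θ) < L^{-α/γ}` is at most `R`. -/
theorem stmt1 (ν d : ℕ) (hd : 0 < d) (M : Matrix (Fin ν) (Fin d) ℝ)
    (ζ Cζ c σ α γ : ℝ) (hCζ : 0 < Cζ) (hc : 0 < c) (hσ : 0 < σ) (hζ : 0 < ζ)
    (hγ : 0 < γ)
    (hDio : ∀ x : Fin d → ℤ, x ≠ 0 → ∀ θ : Fin ν → AddCircle (1 : ℝ),
      Cζ / ‖x‖ ^ ζ ≤
        dist (fun i => ((∑ j, M i j * (x j : ℝ) : ℝ) : AddCircle (1 : ℝ)) + θ i) θ)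
    (h : (Fin ν → AddCircle (1 : ℝ)) → ℝ) (hcont : Continuous h) (hnn : ∀ θ, 0 ≤ h θ)
    (hfin : {θ' | h θ' = 0}.Finite)
    (hlow : ∀ θ', ∃ θt, h θt = 0 ∧ c * dist θ' θt ^ σ ≤ h θ')
    (hα : α > γ * σ * ζ) :
    ∃ L0 : ℝ, ∀ L ≥ L0, ∀ θ : Fin ν → AddCircle (1 : ℝ),
      {x : Fin d → ℤ | (∑ i, (|x i| : ℝ)) ≤ L ∧
        h (fun i => ((∑ j, M i j * (x j : ℝ) : ℝ) : AddCircle (1 : ℝ)) + θ i)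
          < L ^ (-(α / γ))}.encard ≤ {θ' | h θ' = 0}.ncard :=
  stmt1_general ν d M ζ Cζ c σ α γ hCζ hc hσ hζ hγ hDio h hfin hlow hα
end
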